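/- In a one-dimensional quasi-local integral domain D, if a and b are two non-associate atoms, then a ∤ b and yet (a,b)_v ≠ D. -/

import Mathlib

/-!
Since `D` is one-dimensional and local, the maximal ideal is the radical of any nonzero principal
ideal, so some power of `b` lies in `(a)`. Taking the least such power `b ^ (n + 1)`, the element
`b ^ n / a` of the fraction field lies in `(a, b)⁻¹` but not in `D`, so `(a, b)_v ≠ D`.
-/

/-- Membership in the divisorial closure `A_v` of an ideal `A` of a domain `D`:
`A_v` is the intersection of all nonzero principal fractional ideals `(d/c)D`
containing `A`.  Here `x ∈ (d/c)D` is expressed as `d ∣ c * x`.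
Note `(a,b)_v = D` if and only if `VMem (span {a,b}) 1`. -/
def VMem {D : Type*} [CommRing D] (A : Ideal D) (x : D) : Prop :=
  ∀ c d : D, c ≠ 0 → d ≠ 0 → (∀ a ∈ A, d ∣ c * a) → d ∣ c * x

section VMem

variable {D : Type*} [CommRing D] [NoZeroDivisors D] {a b : D}

theorem not_vMem_one_span_pair_of_dvd_pow_succ {n : ℕ} (ha : a ≠ 0) (hb : b ≠ 0)
    (hsucc : a ∣ b ^ (n + 1)) (hn : ¬ a ∣ b ^ n) : ¬ VMem (Ideal.span {a, b}) 1 := by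
  have hmem : ∀ x ∈ Ideal.span {a, b}, a ∣ b ^ n * x := by
    intro x hx
    obtain ⟨r, s, rfl⟩ := Ideal.mem_span_pair.mp hx
    have hsb : a ∣ b ^ n * b := pow_succ b n ▸ hsucc
    rw [mul_add, mul_left_comm, mul_left_comm _ s]
    exact dvd_add (dvd_mul_of_dvd_right (dvd_mul_left a _) r) (dvd_mul_of_dvd_right hsb s)
  exact fun hV ↦ hn (by simpa using hV (b ^ n) a (pow_ne_zero n hb) ha hmem)

theorem not_vMem_one_span_pair_of_dvd_pow (ha : ¬ IsUnit a) (ha0 : a ≠ 0) (hb : b ≠ 0)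
    (hpow : ∃ m, a ∣ b ^ m) : ¬ VMem (Ideal.span {a, b}) 1 := by
  have hone : ¬ a ∣ b ^ 0 := by rwa [pow_zero, ← isUnit_iff_dvd_one]
  obtain ⟨n, hn, hsucc⟩ := Nat.exists_not_and_succ_of_not_zero_of_exists hone hpow
  exact not_vMem_one_span_pair_of_dvd_pow_succ ha0 hb hsucc hn

end VMem

theorem exists_dvd_pow_of_ringKrullDim_eq_one {D : Type*} [CommRing D] [IsDomain D]
    [IsLocalRing D] (hdim : ringKrullDim D = 1) {a b : D} (ha : a ≠ 0) (hb : ¬ IsUnit b) :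
    ∃ m, a ∣ b ^ m := by
  have hrad := (ringKrullDim_eq_one_iff_of_isLocalRing_isDomain.mp hdim).2 a ha
    ((IsLocalRing.mem_maximalIdeal b).mpr hb)
  obtain ⟨m, hm⟩ := Ideal.mem_radical_iff.mp hrad
  exact ⟨m, Ideal.mem_span_singleton.mp hm⟩

theorem stmt7 (D : Type*) [CommRing D] [IsDomain D] [IsLocalRing D]
    (hdim : ringKrullDim D = 1)
    (a b : D) (ha : Irreducible a) (hb : Irreducible b) (hab : ¬ Associated a b) :
    ¬ a ∣ b ∧ ¬ VMem (Ideal.span ({a, b} : Set D)) 1 :=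
  ⟨fun hdvd ↦ hab (ha.associated_of_dvd hb hdvd),
    not_vMem_one_span_pair_of_dvd_pow ha.not_isUnit ha.ne_zero hb.ne_zero
      (exists_dvd_pow_of_ringKrullDim_eq_one hdim ha.ne_zero hb.not_isUnit)⟩
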